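/- Let G_1, ..., G_n be nonnegative random variables of the form G_k = ξ_k g_k where ξ_1, ..., ξ_n are i.i.d. Exp(1) random variables and g_1, ..., g_n are nonnegative random variables with g_k measurable with respect to a filtration F_{k-1} and ξ_k independent of F_{k-1}·σ(g_k). Suppose sup_k g_k ≤ L almost surely and E[Σ_{k=1}^n g_k] ≤ M for deterministic bounds L, M. Then E[(Σ_{k=1}^n ξ_k g_k)^2] ≤ 2 E[Σ_{k=1}^n ξ_k g_k] (M + L). -/

import Mathlib

/-!
Write `a k = ξ k * g k`, so that `(∑ a k)² = ∑ⱼ (a j² + 2 a j ∑_{k > j} a k)`. Because `ξ k` is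
independent of `ℱ k`, on which `g k` and every earlier `a j` depend, it can be replaced by its
moments `E ξ = 1`, `E ξ² = 2`: this gives `E[a j²] = 2 E[g j²] ≤ 2 L E[a j]` and
`E[a j a k] = E[a j g k]` for `j < k`. Conditioning `∑_{k > j} g k` on `ℱ (j + 1)`, with respect
to which `a j` is measurable, bounds the cross terms by `M E[a j]`, and summing over `j` yields
`E[G²] ≤ (2 L + 2 M) E[G]`.
-/

open MeasureTheory ProbabilityTheory Set Real Finset
open scoped Nat

lemma integrableOn_exp_neg_mul_pow (k : ℕ) :
    IntegrableOn (fun t : ℝ => exp (-t) * t ^ k) (Ioi 0) := by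
  simpa [Real.rpow_natCast] using Real.GammaIntegral_convergent (s := k + 1) (by positivity)

lemma integral_exp_neg_mul_pow (k : ℕ) : ∫ t in Ioi (0 : ℝ), exp (-t) * t ^ k = k ! := by
  simpa [Real.rpow_natCast] using
    (Real.Gamma_eq_integral (s := k + 1) (by positivity)).symm.trans (Real.Gamma_nat_eq_factorial k)

section ExponentialTail

variable {Ω : Type*} [MeasurableSpace Ω] {P : Measure Ω} {ξ : Ω → ℝ}

/-- Layer cake: `E[ξ ^ (k + 1)] = ∫₀^∞ P(ξ > t) (k + 1) t ^ k dt = (k + 1) Γ(k + 1)`. -/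
lemma lintegral_ofReal_pow_succ_of_exp_tail (hξ : Measurable ξ) (hξ0 : ∀ ω, 0 ≤ ξ ω)
    (htail : ∀ t : ℝ, 0 ≤ t → P {ω | t < ξ ω} = ENNReal.ofReal (exp (-t))) (k : ℕ) :
    ∫⁻ ω, ENNReal.ofReal (ξ ω ^ (k + 1)) ∂P = (k + 1)! := by
  have hpow (x : ℝ) : ∫ t in (0 : ℝ)..x, (k + 1) * t ^ k = x ^ (k + 1) := by
    rw [intervalIntegral.integral_const_mul, integral_pow]
    field_simp
    simp
  have hdens_nonneg : ∀ t ∈ Ioi (0 : ℝ), 0 ≤ (k + 1) * (exp (-t) * t ^ k) := fun t ht => by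
    have := ht.out.le
    positivity
  have layer := lintegral_comp_eq_lintegral_meas_lt_mul P (g := fun t : ℝ => (k + 1) * t ^ k)
    (ae_of_all _ hξ0) hξ.aemeasurable
    (fun t _ => (by fun_prop : Continuous _).intervalIntegrable 0 t)
    ((ae_restrict_iff' measurableSet_Ioi).2 (ae_of_all _ fun t ht => by
      have := ht.out.le
      positivity))
  simp only [hpow] at layer
  calc ∫⁻ ω, ENNReal.ofReal (ξ ω ^ (k + 1)) ∂P
      = ∫⁻ t in Ioi 0, ENNReal.ofReal ((k + 1) * (exp (-t) * t ^ k)) := by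
        rw [layer]
        refine setLIntegral_congr_fun measurableSet_Ioi fun t ht => ?_
        rw [htail t ht.out.le, ← ENNReal.ofReal_mul (exp_pos _).le]
        ring_nf
    _ = ENNReal.ofReal ((k + 1) * k !) := by
        rw [← ofReal_integral_eq_lintegral_ofReal ((integrableOn_exp_neg_mul_pow k).const_mul _)
          ((ae_restrict_iff' measurableSet_Ioi).2 (ae_of_all _ hdens_nonneg)),
          integral_const_mul, integral_exp_neg_mul_pow]
    _ = (k + 1)! := by rw [← ENNReal.ofReal_natCast, Nat.factorial_succ]; push_cast; rfl

lemma integrable_pow_succ_of_exp_tail (hξ : Measurable ξ) (hξ0 : ∀ ω, 0 ≤ ξ ω)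
    (htail : ∀ t : ℝ, 0 ≤ t → P {ω | t < ξ ω} = ENNReal.ofReal (exp (-t))) (k : ℕ) :
    Integrable (fun ω => ξ ω ^ (k + 1)) P := by
  refine ⟨(hξ.pow_const _).aestronglyMeasurable, ?_⟩
  rw [hasFiniteIntegral_iff_ofReal (ae_of_all _ fun ω => pow_nonneg (hξ0 ω) _),
    lintegral_ofReal_pow_succ_of_exp_tail hξ hξ0 htail]
  exact ENNReal.natCast_lt_top _

lemma integral_pow_succ_of_exp_tail (hξ : Measurable ξ) (hξ0 : ∀ ω, 0 ≤ ξ ω)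
    (htail : ∀ t : ℝ, 0 ≤ t → P {ω | t < ξ ω} = ENNReal.ofReal (exp (-t))) (k : ℕ) :
    ∫ ω, ξ ω ^ (k + 1) ∂P = (k + 1)! := by
  rw [integral_eq_lintegral_of_nonneg_ae (ae_of_all _ fun ω => pow_nonneg (hξ0 ω) _)
    (hξ.pow_const _).aestronglyMeasurable, lintegral_ofReal_pow_succ_of_exp_tail hξ hξ0 htail]
  simp

end ExponentialTail

section Independence

variable {Ω : Type*} {ℱ m0 : MeasurableSpace Ω} {P : Measure Ω} {ξ X g : Ω → ℝ}

lemma integral_mul_comp_of_indep (hle : ℱ ≤ m0)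
    (hind : Indep (MeasurableSpace.comap ξ inferInstance) ℱ P) (hξ : Measurable ξ)
    (hX : Measurable[ℱ] X) {f : ℝ → ℝ} (hf : Measurable f) :
    ∫ ω, X ω * f (ξ ω) ∂P = (∫ ω, X ω ∂P) * ∫ ω, f (ξ ω) ∂P :=
  IndepFun.integral_mul_eq_mul_integral
    ((IndepFun.symm (indep_of_indep_of_le_right hind hX.comap_le)).comp measurable_id hf)
    (hX.mono hle le_rfl).aestronglyMeasurable (hf.comp hξ).aestronglyMeasurable

lemma integral_mul_mul_eq_of_indep (hle : ℱ ≤ m0)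
    (hind : Indep (MeasurableSpace.comap ξ inferInstance) ℱ P) (hξ : Measurable ξ)
    (hξ1 : ∫ ω, ξ ω ∂P = 1) (hX : Measurable[ℱ] X) (hg : Measurable[ℱ] g) :
    ∫ ω, X ω * (ξ ω * g ω) ∂P = ∫ ω, X ω * g ω ∂P := by
  have h := integral_mul_comp_of_indep hle hind hξ (hX.mul hg) measurable_id
  simp only [id, Pi.mul_apply, hξ1, mul_one] at h
  rw [← h]
  congr 1; ext ω; ring

lemma integral_mul_sq_le_of_indep [IsFiniteMeasure P] (hle : ℱ ≤ m0)
    (hind : Indep (MeasurableSpace.comap ξ inferInstance) ℱ P) (hξ : Measurable ξ)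
    (hξ2 : ∫ ω, ξ ω ^ 2 ∂P = 2) (hg : Measurable[ℱ] g) {L : ℝ} (hg0 : ∀ ω, 0 ≤ g ω)
    (hgL : ∀ ω, g ω ≤ L) :
    ∫ ω, (ξ ω * g ω) ^ 2 ∂P ≤ 2 * L * ∫ ω, g ω ∂P := by
  have hgm : Measurable g := hg.mono hle le_rfl
  have hgi : Integrable g P :=
    .of_mem_Icc 0 L hgm.aemeasurable (ae_of_all _ fun ω => ⟨hg0 ω, hgL ω⟩)
  have hg2i : Integrable (fun ω => g ω ^ 2) P :=
    .of_mem_Icc 0 (L ^ 2) (hgm.pow_const 2).aemeasurable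
      (ae_of_all _ fun ω => ⟨sq_nonneg _, pow_le_pow_left₀ (hg0 ω) (hgL ω) 2⟩)
  have hsplit := integral_mul_comp_of_indep hle hind hξ (hg.pow_const 2) (measurable_id.pow_const 2)
  simp only [id, hξ2] at hsplit
  calc ∫ ω, (ξ ω * g ω) ^ 2 ∂P = 2 * ∫ ω, g ω ^ 2 ∂P := by
        rw [mul_comm, ← hsplit]
        congr 1; ext ω; ring
    _ ≤ 2 * ∫ ω, L * g ω ∂P := by
        refine mul_le_mul_of_nonneg_left (integral_mono hg2i (hgi.const_mul L) fun ω => ?_)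
          zero_le_two
        nlinarith [hg0 ω, hgL ω]
    _ = 2 * L * ∫ ω, g ω ∂P := by rw [integral_const_mul, mul_assoc]

end Independence

lemma integral_mul_le_of_condExp_le {Ω : Type*} {m m0 : MeasurableSpace Ω} {P : Measure Ω}
    (hm : m ≤ m0) [SigmaFinite (P.trim hm)] {X S : Ω → ℝ} {M : ℝ}
    (hX : StronglyMeasurable[m] X) (hX0 : ∀ ω, 0 ≤ X ω) (hXi : Integrable X P)
    (hS : Integrable S P) (hXS : Integrable (X * S) P) (hSM : ∀ᵐ ω ∂P, P[S | m] ω ≤ M) :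
    ∫ ω, X ω * S ω ∂P ≤ M * ∫ ω, X ω ∂P := by
  have pull_out : P[X * S | m] =ᵐ[P] X * P[S | m] :=
    condExp_mul_of_stronglyMeasurable_left hX hXS hS
  calc ∫ ω, X ω * S ω ∂P = ∫ ω, (X * P[S | m]) ω ∂P := by
        rw [← integral_condExp hm]
        exact integral_congr_ae pull_out
    _ ≤ ∫ ω, X ω * M ∂P := by
        refine integral_mono_ae (integrable_condExp.congr pull_out) (hXi.mul_const M) ?_
        filter_upwards [hSM] with ω hω using mul_le_mul_of_nonneg_left hω (hX0 ω)
    _ = M * ∫ ω, X ω ∂P := by rw [integral_mul_const, mul_comm]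

lemma sq_sum_range_eq_sum_sq_add_two_mul_sum_Ico (n : ℕ) (b : ℕ → ℝ) :
    (∑ k ∈ range n, b k) ^ 2
      = ∑ j ∈ range n, (b j ^ 2 + 2 * b j * ∑ k ∈ Ico (j + 1) n, b k) := by
  induction n with
  | zero => simp
  | succ n ih =>
    have shift : ∀ j ∈ range n, b j ^ 2 + 2 * b j * ∑ k ∈ Ico (j + 1) (n + 1), b k
        = (b j ^ 2 + 2 * b j * ∑ k ∈ Ico (j + 1) n, b k) + 2 * b n * b j := fun j hj => by
      rw [sum_Ico_succ_top (mem_range.mp hj)]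
      ring
    rw [sum_range_succ, sum_range_succ, sum_congr rfl shift, sum_add_distrib, ← ih, ← mul_sum,
      Ico_self, sum_empty]
    ring

section SecondMoment

variable {Ω : Type*} {m0 : MeasurableSpace Ω} {P : Measure Ω}

lemma integral_sq_sum_range_eq (n : ℕ) {a : ℕ → Ω → ℝ} (ha : ∀ k, MemLp (a k) 2 P) :
    ∫ ω, (∑ k ∈ range n, a k ω) ^ 2 ∂P
      = ∑ j ∈ range n,
          (∫ ω, a j ω ^ 2 ∂P + 2 * ∑ k ∈ Ico (j + 1) n, ∫ ω, a j ω * a k ω ∂P) := by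
  have hprod j k : Integrable (fun ω => a j ω * a k ω) P := (ha j).integrable_mul (ha k)
  have hcross j : Integrable (fun ω => ∑ k ∈ Ico (j + 1) n, 2 * (a j ω * a k ω)) P :=
    integrable_finsetSum _ fun k _ => (hprod j k).const_mul 2
  simp_rw [sq_sum_range_eq_sum_sq_add_two_mul_sum_Ico n, mul_assoc, mul_sum]
  refine (integral_finsetSum _ fun j _ => (ha j).integrable_sq.add (hcross j)).trans
    (sum_congr rfl fun j _ => ?_)
  rw [integral_add' (ha j).integrable_sq (hcross j),
    integral_finsetSum _ fun k _ => (hprod j k).const_mul 2]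
  simp_rw [integral_const_mul]

lemma integral_sq_sum_range_le [IsFiniteMeasure P] (n : ℕ) {a : ℕ → Ω → ℝ}
    (ha : ∀ k, MemLp (a k) 2 P) {c d : ℝ}
    (hdiag : ∀ j, ∫ ω, a j ω ^ 2 ∂P ≤ c * ∫ ω, a j ω ∂P)
    (hcross : ∀ j, ∑ k ∈ Ico (j + 1) n, ∫ ω, a j ω * a k ω ∂P ≤ d * ∫ ω, a j ω ∂P) :
    ∫ ω, (∑ k ∈ range n, a k ω) ^ 2 ∂P ≤ (c + 2 * d) * ∫ ω, ∑ k ∈ range n, a k ω ∂P := by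
  rw [integral_sq_sum_range_eq n ha,
    integral_finsetSum _ fun k _ => (ha k).integrable one_le_two, mul_sum]
  exact sum_le_sum fun j _ => by linarith [hdiag j, hcross j]

end SecondMoment

structure SoftLocalTimeData {Ω : Type*} [m0 : MeasurableSpace Ω] (P : Measure Ω)
    (ξ g : ℕ → Ω → ℝ) (ℱ : ℕ → MeasurableSpace Ω) (L : ℝ) : Prop where
  le : ∀ k, ℱ k ≤ m0
  mono : Monotone ℱ
  adapted_g : ∀ k, Measurable[ℱ k] (g k)
  adapted_ξ : ∀ k, Measurable[ℱ (k + 1)] (ξ k)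
  ξ_nonneg : ∀ k ω, 0 ≤ ξ k ω
  ξ_tail : ∀ k, ∀ t : ℝ, 0 ≤ t → P {ω | t < ξ k ω} = ENNReal.ofReal (exp (-t))
  indep : ∀ k, Indep (MeasurableSpace.comap (ξ k) inferInstance) (ℱ k) P
  g_nonneg : ∀ k ω, 0 ≤ g k ω
  g_le : ∀ k ω, g k ω ≤ L

namespace SoftLocalTimeData

variable {Ω : Type*} [MeasurableSpace Ω] {P : Measure Ω} {ξ g : ℕ → Ω → ℝ}
  {ℱ : ℕ → MeasurableSpace Ω} {L : ℝ}

lemma measurable_ξ (h : SoftLocalTimeData P ξ g ℱ L) (k : ℕ) : Measurable (ξ k) :=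
  (h.adapted_ξ k).mono (h.le (k + 1)) le_rfl

lemma measurable_g (h : SoftLocalTimeData P ξ g ℱ L) (k : ℕ) : Measurable (g k) :=
  (h.adapted_g k).mono (h.le k) le_rfl

lemma norm_g_le (h : SoftLocalTimeData P ξ g ℱ L) (k : ℕ) : ∀ᵐ ω ∂P, ‖g k ω‖ ≤ L :=
  ae_of_all _ fun ω => (Real.norm_of_nonneg (h.g_nonneg k ω)).trans_le (h.g_le k ω)

lemma integral_ξ (h : SoftLocalTimeData P ξ g ℱ L) (k : ℕ) : ∫ ω, ξ k ω ∂P = 1 := by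
  simpa using integral_pow_succ_of_exp_tail (h.measurable_ξ k) (h.ξ_nonneg k) (h.ξ_tail k) 0

lemma integral_ξ_sq (h : SoftLocalTimeData P ξ g ℱ L) (k : ℕ) : ∫ ω, ξ k ω ^ 2 ∂P = 2 := by
  simpa using integral_pow_succ_of_exp_tail (h.measurable_ξ k) (h.ξ_nonneg k) (h.ξ_tail k) 1

lemma memLp_two_ξ_mul (h : SoftLocalTimeData P ξ g ℱ L) (k : ℕ) :
    MemLp (fun ω => ξ k ω * g k ω) 2 P :=
  (memLp_top_of_bound (h.measurable_g k).aestronglyMeasurable L (h.norm_g_le k)).mul'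
    ((memLp_two_iff_integrable_sq (h.measurable_ξ k).aestronglyMeasurable).2
      (integrable_pow_succ_of_exp_tail (h.measurable_ξ k) (h.ξ_nonneg k) (h.ξ_tail k) 1))

lemma adapted_ξ_mul_of_lt (h : SoftLocalTimeData P ξ g ℱ L) {j k : ℕ} (hjk : j < k) :
    Measurable[ℱ k] (fun ω => ξ j ω * g j ω) :=
  ((h.adapted_ξ j).mono (h.mono hjk) le_rfl).mul ((h.adapted_g j).mono (h.mono hjk.le) le_rfl)

lemma integral_ξ_mul (h : SoftLocalTimeData P ξ g ℱ L) (k : ℕ) :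
    ∫ ω, ξ k ω * g k ω ∂P = ∫ ω, g k ω ∂P := by
  simpa using integral_mul_mul_eq_of_indep (h.le k) (h.indep k) (h.measurable_ξ k) (h.integral_ξ k)
    (X := 1) measurable_const (h.adapted_g k)

lemma integral_ξ_mul_sq_le [IsFiniteMeasure P] (h : SoftLocalTimeData P ξ g ℱ L) (k : ℕ) :
    ∫ ω, (ξ k ω * g k ω) ^ 2 ∂P ≤ 2 * L * ∫ ω, ξ k ω * g k ω ∂P :=
  h.integral_ξ_mul k ▸ integral_mul_sq_le_of_indep (h.le k) (h.indep k) (h.measurable_ξ k)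
    (h.integral_ξ_sq k) (h.adapted_g k) (h.g_nonneg k) (h.g_le k)

lemma sum_integral_mul_le [IsFiniteMeasure P] (h : SoftLocalTimeData P ξ g ℱ L) {n : ℕ} {M : ℝ}
    (hM : ∀ k, ∀ᵐ ω ∂P, P[(fun ω => ∑ k' ∈ Ico k n, g k' ω) | ℱ k] ω ≤ M) (j : ℕ) :
    ∑ k ∈ Ico (j + 1) n, ∫ ω, (ξ j ω * g j ω) * (ξ k ω * g k ω) ∂P
      ≤ M * ∫ ω, ξ j ω * g j ω ∂P := by
  have hai := (h.memLp_two_ξ_mul j).integrable one_le_two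
  have hag k : Integrable (fun ω => (ξ j ω * g j ω) * g k ω) P :=
    hai.mul_bdd (h.measurable_g k).aestronglyMeasurable (h.norm_g_le k)
  have hgi k : Integrable (g k) P :=
    (memLp_top_of_bound (h.measurable_g k).aestronglyMeasurable L (h.norm_g_le k)).integrable le_top
  calc ∑ k ∈ Ico (j + 1) n, ∫ ω, (ξ j ω * g j ω) * (ξ k ω * g k ω) ∂P
      = ∑ k ∈ Ico (j + 1) n, ∫ ω, (ξ j ω * g j ω) * g k ω ∂P := sum_congr rfl fun k hk =>
        integral_mul_mul_eq_of_indep (h.le k) (h.indep k) (h.measurable_ξ k) (h.integral_ξ k)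
          (h.adapted_ξ_mul_of_lt (mem_Ico.1 hk).1) (h.adapted_g k)
    _ = ∫ ω, (ξ j ω * g j ω) * ∑ k ∈ Ico (j + 1) n, g k ω ∂P := by
        simp_rw [mul_sum]
        exact (integral_finsetSum _ fun k _ => hag k).symm
    _ ≤ M * ∫ ω, ξ j ω * g j ω ∂P :=
        integral_mul_le_of_condExp_le (h.le (j + 1))
          (h.adapted_ξ_mul_of_lt j.lt_succ_self).stronglyMeasurable
          (fun ω => mul_nonneg (h.ξ_nonneg j ω) (h.g_nonneg j ω)) hai
          (integrable_finsetSum _ fun k _ => hgi k)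
          ((integrable_finsetSum (Ico (j + 1) n) fun k _ => hag k).congr
            (ae_of_all _ fun ω => by simp [mul_sum])) (hM (j + 1))

end SoftLocalTimeData

/-- Second moment bound for soft local times: if `G = Σ_{k<n} ξ_k g_k` with `ξ_k`
i.i.d. Exp(1), each `ξ_k` independent of the past `ℱ k` (to which `g_k` is adapted),
`g_k ≤ L` and all conditional expectations of the remaining sums bounded by `M`, then
`E[G²] ≤ 2 E[G] (M + L)`. -/
theorem soft_local_time_second_moment {Ω : Type*} [m0 : MeasurableSpace Ω]
    (P : Measure Ω) [IsProbabilityMeasure P]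
    (n : ℕ) (ξ g : ℕ → Ω → ℝ) (ℱ : ℕ → MeasurableSpace Ω)
    (hle : ∀ k, ℱ k ≤ m0) (hmono : Monotone ℱ)
    (hgmeas : ∀ k, Measurable[ℱ k] (g k))
    (hξmeas : ∀ k, Measurable[ℱ (k + 1)] (ξ k))
    (hξnonneg : ∀ k ω, 0 ≤ ξ k ω)
    (hξlaw : ∀ k, ∀ t : ℝ, 0 ≤ t →
      P {ω | t < ξ k ω} = ENNReal.ofReal (Real.exp (-t)))
    (hξindep : ∀ k, Indep (MeasurableSpace.comap (ξ k) inferInstance) (ℱ k) P)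
    (L M : ℝ) (hg0 : ∀ k ω, 0 ≤ g k ω) (hgL : ∀ k ω, g k ω ≤ L)
    (hM : ∀ k, ∀ᵐ ω ∂P,
      (P[(fun ω => ∑ k' ∈ Finset.Ico k n, g k' ω) | ℱ k]) ω ≤ M) :
    ∫ ω, (∑ k ∈ Finset.range n, ξ k ω * g k ω) ^ 2 ∂P
      ≤ 2 * (∫ ω, ∑ k ∈ Finset.range n, ξ k ω * g k ω ∂P) * (M + L) := by
  have h : SoftLocalTimeData P ξ g ℱ L :=
    ⟨hle, hmono, hgmeas, hξmeas, hξnonneg, hξlaw, hξindep, hg0, hgL⟩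
  calc ∫ ω, (∑ k ∈ range n, ξ k ω * g k ω) ^ 2 ∂P
      ≤ (2 * L + 2 * M) * ∫ ω, ∑ k ∈ range n, ξ k ω * g k ω ∂P :=
        integral_sq_sum_range_le n h.memLp_two_ξ_mul h.integral_ξ_mul_sq_le (h.sum_integral_mul_le hM)
    _ = 2 * (∫ ω, ∑ k ∈ range n, ξ k ω * g k ω ∂P) * (M + L) := by ring
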